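/- Let (p_n) be a sequence in (0,1) with p_n → 0, and consider the randomly oriented complete binary tree T_n of height n with parameter p_n. Let ℓ_max^{(n)} = max({0} ∪ {ℓ(v) : v ∈ V_n, Y_v holds}) be the maximum level reached by water in downwards percolation, and let κ_n = (log 2)·n/log(1/p_n). Then P(ℓ_max^{(n)} ∈ {⌊κ_n + 1/2⌋ − 1, ⌊κ_n + 1/2⌋}) → 1 as n → ∞. -/

import Mathlib

open MeasureTheory ProbabilityTheory Finset
open scoped Classical

/-- Vertices of the complete binary tree of height `n`: words over `{0,1}`
of length at most `n`.  The empty word is the root; words of length `n`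
are the leaves; the level of `v` is `n - |v|`. -/
def Vtx (n : ℕ) : Type := {l : List Bool // l.length ≤ n}

/-- Edges of the complete binary tree of height `n`, indexed by the nonempty
words of length at most `n`: the edge joins such a word to its predecessor
(the word obtained by deleting the last letter). -/
def Edg (n : ℕ) : Type := {l : List Bool // l ≠ [] ∧ l.length ≤ n}

noncomputable instance (n : ℕ) : Fintype (Vtx n) := by
  apply Fintype.ofInjective (fun v : Vtx n => fun i : Fin (n + 1) => v.1[i.1]?)
  intro u v h
  apply Subtype.ext
  apply List.ext_getElem?
  intro m
  by_cases hm : m < n + 1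
  · exact congrFun h ⟨m, hm⟩
  · have hu := u.2
    have hv := v.2
    rw [List.getElem?_eq_none_iff.2, List.getElem?_eq_none_iff.2] <;> omega

noncomputable instance (n : ℕ) : Fintype (Edg n) := by
  apply Fintype.ofInjective (fun v : Edg n => fun i : Fin (n + 1) => v.1[i.1]?)
  intro u v h
  apply Subtype.ext
  apply List.ext_getElem?
  intro m
  by_cases hm : m < n + 1
  · exact congrFun h ⟨m, hm⟩
  · have hu := u.2.2
    have hv := v.2.2
    rw [List.getElem?_eq_none_iff.2, List.getElem?_eq_none_iff.2] <;> omega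

/-- The Bernoulli measure on `Bool`: `true` has probability `p`,
`false` has probability `1 - p`. -/
noncomputable def bern (p : ℝ) : Measure Bool :=
  (ENNReal.ofReal p) • Measure.dirac true + (ENNReal.ofReal (1 - p)) • Measure.dirac false

instance (p : ℝ) : IsFiniteMeasure (bern p) := by
  constructor
  simp only [bern, Measure.add_apply, Measure.smul_apply, smul_eq_mul]
  exact ENNReal.add_lt_top.mpr
    ⟨ENNReal.mul_lt_top ENNReal.ofReal_lt_top (by simp),
     ENNReal.mul_lt_top ENNReal.ofReal_lt_top (by simp)⟩

/-- The random orientation measure on the complete binary tree of height `n`: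
each edge is oriented towards the root (coordinate `true`) with probability `p`,
independently of the other edges. -/
noncomputable def treeMeasure (n : ℕ) (p : ℝ) : Measure (Edg n → Bool) :=
  Measure.pi fun _ => bern p

/-- One oriented step in the configuration `ω`: `a → b` if the tree edge between
`a` and `b` is oriented from `a` to `b` (coordinate `true` means oriented towards
the root, i.e. towards the shorter word). -/
def TStep {n : ℕ} (ω : Edg n → Bool) (a b : Vtx n) : Prop :=
  ∃ e : Edg n, (ω e = true ∧ e.1 = a.1 ∧ b.1 = e.1.dropLast) ∨
    (ω e = false ∧ e.1 = b.1 ∧ a.1 = e.1.dropLast)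

/-- `X v`: the event that water, pumped into the leaves, reaches `v`, i.e. there is
a directed path from some leaf to `v`. -/
def Xwet {n : ℕ} (v : Vtx n) : Set (Edg n → Bool) :=
  {ω | ∃ w : Vtx n, w.1.length = n ∧ Relation.ReflTransGen (TStep ω) w v}

/-- `Y v`: the event that `v` gets wet in downwards percolation: there is a leaf `w`
above `v` such that every edge on the path from `w` down to `v` is oriented
towards the root. -/
def Ydown {n : ℕ} (v : Vtx n) : Set (Edg n → Bool) :=
  {ω | ∃ w : List Bool, w.length = n ∧ v.1 <+: w ∧
    ∀ u : Edg n, u.1 <+: w → v.1.length < u.1.length → ω u = true}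

/-- The recursion `ρ₀ = 1`, `ρ_{k+1} = 2 p ρ_k - (p ρ_k)²`. -/
noncomputable def rho (p : ℝ) : ℕ → ℝ
  | 0 => 1
  | k + 1 => 2 * p * rho p k - (p * rho p k) ^ 2

/-- `α^{(n)}_k`, the probability that water reaches a level-`k` vertex from below. -/
noncomputable def alpha (p : ℝ) (n k : ℕ) : ℝ :=
  (1 - p) * p * ∑ i ∈ Finset.range (n - k),
    (1 - p) ^ i * rho p (k + i) * ∏ j ∈ Finset.range i, (1 - p * rho p (k + j))

/-- The size of the percolation cluster `C_n` (leaves excluded). -/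
noncomputable def clusterSize (n : ℕ) (ω : Edg n → Bool) : ℕ :=
  Nat.card {v : Vtx n // v.1.length < n ∧ ω ∈ Xwet v}

/-- The size of the downwards percolation cluster `C↓_n` (leaves excluded). -/
noncomputable def downClusterSize (n : ℕ) (ω : Edg n → Bool) : ℕ :=
  Nat.card {v : Vtx n // v.1.length < n ∧ ω ∈ Ydown v}

/-- The maximum level reached by water in downwards percolation. -/
noncomputable def maxLevel (n : ℕ) (ω : Edg n → Bool) : ℕ :=
  sSup ({0} ∪ {k | ∃ v : Vtx n, ω ∈ Ydown v ∧ n - v.1.length = k})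

/-- The root of the tree. -/
def root (n : ℕ) : Vtx n := ⟨[], by simp⟩

section Perc

variable {n : ℕ} {p : ℝ}

lemma measSet {n : ℕ} (A : Set (Edg n → Bool)) : MeasurableSet A :=
  (Set.to_countable A).measurableSet

lemma bern_true (p : ℝ) : bern p {true} = ENNReal.ofReal p := by
  simp [bern, Measure.dirac_apply' _ (by trivial : MeasurableSet ({true} : Set Bool))]

lemma bern_univ (h0 : 0 ≤ p) (h1 : p ≤ 1) : bern p Set.univ = 1 := by
  simp [bern]
  rw [← ENNReal.ofReal_add h0 (by linarith), ← ENNReal.ofReal_one]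
  norm_num

lemma bern_prob (h0 : 0 ≤ p) (h1 : p ≤ 1) : IsProbabilityMeasure (bern p) :=
  ⟨bern_univ h0 h1⟩

lemma treeMeasure_prob (h0 : 0 ≤ p) (h1 : p ≤ 1) :
    IsProbabilityMeasure (treeMeasure n p) := by
  constructor
  rw [treeMeasure, ← Set.pi_univ Set.univ, MeasureTheory.Measure.pi_pi]
  simp only [bern_univ h0 h1, Finset.prod_const_one]

lemma measure_edge_true (h0 : 0 ≤ p) (h1 : p ≤ 1) (e : Edg n) :
    treeMeasure n p {ω | ω e = true} = ENNReal.ofReal p := by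
  classical
  have hs : {ω : Edg n → Bool | ω e = true} =
      Set.pi Set.univ (fun i => if i = e then {true} else Set.univ) := by
    ext ω
    simp only [Set.mem_pi, Set.mem_univ, forall_true_left, Set.mem_setOf_eq]
    constructor
    · intro h i
      by_cases hi : i = e <;> simp [hi, h]
    · intro h
      have := h e
      simpa using this
  rw [hs, treeMeasure, MeasureTheory.Measure.pi_pi]
  have : ∀ i : Edg n, bern p (if i = e then ({true} : Set Bool) else Set.univ)
      = if i = e then ENNReal.ofReal p else 1 := by
    intro i
    by_cases hi : i = e
    · simp [hi, bern_true]
    · rw [if_neg hi, if_neg hi, bern_univ h0 h1]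
  simp only [this]
  simp

def DetBy {n : ℕ} (A : Set (Edg n → Bool)) (S : Set (Edg n)) : Prop :=
  ∀ ⦃ω ω' : Edg n → Bool⦄, (∀ e ∈ S, ω e = ω' e) → ω ∈ A → ω' ∈ A

lemma DetBy.mono {A : Set (Edg n → Bool)} {S T : Set (Edg n)}
    (h : DetBy A S) (hST : S ⊆ T) : DetBy A T :=
  fun _ _ hag => h (fun e he => hag e (hST he))

lemma DetBy.compl {A : Set (Edg n → Bool)} {S : Set (Edg n)}
    (h : DetBy A S) : DetBy Aᶜ S :=
  fun ω ω' hag hA hA' => hA (h (fun e he => (hag e he).symm) hA')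

lemma DetBy.inter {A B : Set (Edg n → Bool)} {S : Set (Edg n)}
    (hA : DetBy A S) (hB : DetBy B S) : DetBy (A ∩ B) S :=
  fun _ _ hag h => ⟨hA hag h.1, hB hag h.2⟩

lemma DetBy.union {A B : Set (Edg n → Bool)} {S : Set (Edg n)}
    (hA : DetBy A S) (hB : DetBy B S) : DetBy (A ∪ B) S :=
  fun _ _ hag h => h.elim (fun h => Or.inl (hA hag h)) (fun h => Or.inr (hB hag h))

lemma indep_of_detBy (h0 : 0 ≤ p) (h1 : p ≤ 1) {A B : Set (Edg n → Bool)}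
    {S : Set (Edg n)} (hA : DetBy A S) (hB : DetBy B Sᶜ) :
    treeMeasure n p (A ∩ B) = treeMeasure n p A * treeMeasure n p B := by
  classical
  haveI := bern_prob h0 h1
  set q : Edg n → Prop := fun e => e ∈ S with hq
  let E := MeasurableEquiv.piEquivPiSubtypeProd (fun _ : Edg n => Bool) q
  have hmp := MeasureTheory.measurePreserving_piEquivPiSubtypeProd
    (fun _ : Edg n => bern p) q
  set A₁ : Set ({e : Edg n // q e} → Bool) := (fun ω (i : {e // q e}) => ω i.1) '' A with hA₁
  set B₂ : Set ({e : Edg n // ¬ q e} → Bool) := (fun ω (i : {e // ¬ q e}) => ω i.1) '' B with hB₂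
  have hAe : ∀ ω : Edg n → Bool, ω ∈ A ↔ (E ω).1 ∈ A₁ := by
    intro ω
    constructor
    · intro h; exact ⟨ω, h, rfl⟩
    · rintro ⟨ω', hω', hh⟩
      exact hA (fun e he => (congrFun hh ⟨e, he⟩ : _)) hω'
  have hBe : ∀ ω : Edg n → Bool, ω ∈ B ↔ (E ω).2 ∈ B₂ := by
    intro ω
    constructor
    · intro h; exact ⟨ω, h, rfl⟩
    · rintro ⟨ω', hω', hh⟩
      exact hB (fun e he => (congrFun hh ⟨e, he⟩ : _)) hω'
  have key : ∀ (X : Set ({e : Edg n // q e} → Bool)) (Y : Set ({e : Edg n // ¬ q e} → Bool)),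
      treeMeasure n p (E ⁻¹' (X ×ˢ Y)) =
        (Measure.pi fun _ : {e : Edg n // q e} => bern p) X *
        (Measure.pi fun _ : {e : Edg n // ¬ q e} => bern p) Y := by
    intro X Y
    rw [treeMeasure, hmp.measure_preimage ((X.to_countable.measurableSet.prod
      Y.to_countable.measurableSet)).nullMeasurableSet]
    exact MeasureTheory.Measure.prod_prod X Y
  have eA : A = E ⁻¹' (A₁ ×ˢ Set.univ) := by
    ext ω; simp [hAe ω, Set.mem_prod]
  have eB : B = E ⁻¹' (Set.univ ×ˢ B₂) := by
    ext ω; simp [hBe ω, Set.mem_prod]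
  have eAB : A ∩ B = E ⁻¹' (A₁ ×ˢ B₂) := by
    ext ω; simp [hAe ω, hBe ω, Set.mem_prod, Set.mem_inter_iff]
  rw [eAB, eA, eB, key, key, key]
  simp [mul_comm, mul_assoc, mul_left_comm]

end Perc
section Perc2

variable {n : ℕ} {p : ℝ}

/-- child vertex -/
def child (v : Vtx n) (b : Bool) (h : v.1.length < n) : Vtx n :=
  ⟨v.1 ++ [b], by simp; omega⟩

/-- edge to child -/
def cedge (v : Vtx n) (b : Bool) (h : v.1.length < n) : Edg n :=
  ⟨v.1 ++ [b], by simp, by simp; omega⟩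

lemma exists_ext {v w : List Bool} (hpre : v <+: w) (hlt : v.length < w.length) :
    ∃ b : Bool, v ++ [b] <+: w := by
  obtain ⟨t, rfl⟩ := hpre
  match t with
  | [] => simp at hlt
  | b :: t' => exact ⟨b, t', by simp⟩

lemma prefix_eq_of_length {u x w : List Bool} (h1 : u <+: w) (h2 : x <+: w)
    (h : u.length = x.length) : u = x := by
  rcases List.prefix_or_prefix_of_prefix h1 h2 with h' | h'
  · exact h'.eq_of_length h
  · exact (h'.eq_of_length h.symm).symm

lemma Ydown_leaf {v : Vtx n} (h : v.1.length = n) : Ydown v = Set.univ := by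
  ext ω
  simp only [Ydown, Set.mem_setOf_eq, Set.mem_univ, iff_true]
  refine ⟨v.1, h, List.prefix_refl _, fun u hu hlen => absurd hlen (by
    have := hu.length_le; omega)⟩

lemma Ydown_succ {v : Vtx n} (h : v.1.length < n) :
    Ydown v = ({ω | ω (cedge v false h) = true} ∩ Ydown (child v false h)) ∪
      ({ω | ω (cedge v true h) = true} ∩ Ydown (child v true h)) := by
  ext ω
  simp only [Ydown, Set.mem_setOf_eq, Set.mem_union, Set.mem_inter_iff]
  constructor
  · rintro ⟨w, hwl, hpre, hcond⟩
    obtain ⟨b, hb⟩ := exists_ext hpre (by omega)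
    have hedge : ω (cedge v b h) = true := by
      refine hcond (cedge v b h) hb (by simp [cedge])
    have hY : ω ∈ Ydown (child v b h) := by
      refine ⟨w, hwl, hb, fun u hu hlen => hcond u hu ?_⟩
      simp only [child] at hlen
      simp at hlen; omega
    cases b
    · exact Or.inl ⟨hedge, hY⟩
    · exact Or.inr ⟨hedge, hY⟩
  · intro hcase
    have main : ∀ b : Bool, ω (cedge v b h) = true → ω ∈ Ydown (child v b h) →
        ∃ w, w.length = n ∧ v.1 <+: w ∧
          ∀ u : Edg n, u.1 <+: w → v.1.length < u.1.length → ω u = true := by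
      intro b hedge hY
      obtain ⟨w, hwl, hpre, hcond⟩ := hY
      refine ⟨w, hwl, ((List.prefix_append _ _).trans hpre : v.1 <+: w), ?_⟩
      intro u hu hlen
      rcases Nat.lt_or_ge v.1.length.succ u.1.length with h' | h'
      · exact hcond u hu (by simp [child]; omega)
      · -- u.1.length = v.1.length + 1, so u = cedge v b h
        have : u.1 = v.1 ++ [b] := by
          refine prefix_eq_of_length hu (hpre : (child v b h).1 <+: w) ?_
          simp [child]; omega
        have : u = cedge v b h := Subtype.ext (by simpa [cedge] using this)
        rw [this]; exact hedge
    rcases hcase with ⟨hedge, hY⟩ | ⟨hedge, hY⟩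
    · exact main false hedge hY
    · exact main true hedge hY

lemma Ydown_detBy (v : Vtx n) :
    DetBy (Ydown v) {u : Edg n | v.1 <+: u.1 ∧ v.1.length < u.1.length} := by
  rintro ω ω' hag ⟨w, hwl, hpre, hcond⟩
  refine ⟨w, hwl, hpre, fun u hu hlen => ?_⟩
  rw [← hag u ⟨List.prefix_of_prefix_length_le hpre hu (by omega), hlen⟩]
  exact hcond u hu hlen

lemma edge_detBy (e : Edg n) : DetBy {ω : Edg n → Bool | ω e = true} {e} := by
  rintro ω ω' hag h
  simpa [← hag e rfl] using h

lemma disj_prefix (l : List Bool) :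
    Disjoint {u : Edg n | l ++ [false] <+: u.1} {u : Edg n | l ++ [true] <+: u.1} := by
  rw [Set.disjoint_left]
  rintro u h0 h1
  have := prefix_eq_of_length (h0 : _ <+: u.1) h1 (by simp)
  simpa using this

lemma rho_bounds (h0 : 0 ≤ p) (h1 : p ≤ 1) (k : ℕ) :
    0 ≤ rho p k ∧ rho p k ≤ 1 := by
  induction k with
  | zero => norm_num [rho]
  | succ k ih =>
    obtain ⟨ha, hb⟩ := ih
    have hy0 : 0 ≤ p * rho p k := mul_nonneg h0 ha
    have hy1 : p * rho p k ≤ 1 := by nlinarith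
    constructor
    · simp only [rho]; nlinarith
    · simp only [rho]; nlinarith

lemma rho_le_pow (h0 : 0 ≤ p) (h1 : p ≤ 1) (k : ℕ) : rho p k ≤ (2 * p) ^ k := by
  induction k with
  | zero => norm_num [rho]
  | succ k ih =>
    have ha := (rho_bounds h0 h1 k).1
    have hp2 : (0:ℝ) ≤ (2 * p) ^ k := by positivity
    show 2 * p * rho p k - (p * rho p k)^2 ≤ _
    nlinarith [pow_succ (2*p) k, sq_nonneg (p * rho p k)]

lemma rho_ge_pow (h0 : 0 ≤ p) (h1 : p ≤ 1/4) (k : ℕ) :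
    (2 * p) ^ k * (1 - p * ((∑ j ∈ Finset.range k, (2*p)^j) / 2)) ≤ rho p k := by
  have h1' : p ≤ 1 := by linarith
  induction k with
  | zero => norm_num [rho]
  | succ k ih =>
    have ha := (rho_bounds h0 h1' k).1
    have hb := (rho_bounds h0 h1' k).2
    have hub := rho_le_pow h0 h1' k
    have hsum : ∑ j ∈ Finset.range (k+1), (2*p)^j
        = ∑ j ∈ Finset.range k, (2*p)^j + (2*p)^k := Finset.sum_range_succ _ _
    have hp2 : (0:ℝ) ≤ (2 * p) ^ k := by positivity
    -- key: rho (k+1) = 2p*rho k - (p * rho k)^2 ≥ 2p*L - p^2*U^2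
    simp only [rho, hsum, pow_succ]
    nlinarith [sq_nonneg (rho p k), mul_nonneg h0 ha, sq_nonneg (p * rho p k),
      mul_le_mul_of_nonneg_left ih (by linarith : (0:ℝ) ≤ 2 * p),
      mul_le_mul_of_nonneg_left (mul_le_mul hub hub ha hp2) (mul_nonneg h0 h0)]

lemma geom_sum_le_two (h0 : 0 ≤ p) (h1 : p ≤ 1/4) (k : ℕ) :
    (∑ j ∈ Finset.range k, (2*p)^j) ≤ 2 := by
  induction k with
  | zero => norm_num
  | succ k ih =>
    rw [geom_sum_succ]
    have hnn : (0:ℝ) ≤ ∑ j ∈ Finset.range k, (2*p)^j :=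
      Finset.sum_nonneg fun j _ => by positivity
    nlinarith

lemma rho_ge (h0 : 0 ≤ p) (h1 : p ≤ 1/4) (k : ℕ) :
    (2 * p) ^ k * (1 - p) ≤ rho p k := by
  refine le_trans ?_ (rho_ge_pow h0 h1 k)
  have hs := geom_sum_le_two h0 h1 k
  have hnn : (0:ℝ) ≤ ∑ j ∈ Finset.range k, (2*p)^j :=
    Finset.sum_nonneg fun j _ => by positivity
  have hp2 : (0:ℝ) ≤ (2 * p) ^ k := by positivity
  have := mul_nonneg (mul_nonneg hp2 h0)
    (by linarith : (0:ℝ) ≤ 1 - (∑ j ∈ Finset.range k, (2*p)^j)/2)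
  nlinarith

end Perc2
section Perc3

variable {n : ℕ} {p : ℝ}

lemma Ydown_measure (h0 : 0 ≤ p) (h1 : p ≤ 1) :
    ∀ k, ∀ v : Vtx n, n - v.1.length = k →
      treeMeasure n p (Ydown v) = ENNReal.ofReal (rho p k) := by
  intro k
  induction k with
  | zero =>
    intro v hv
    have hlen : v.1.length = n := by have := v.2; omega
    haveI := treeMeasure_prob (n := n) h0 h1
    rw [Ydown_leaf hlen]
    simp [rho]
  | succ k ih =>
    intro v hv
    have h : v.1.length < n := by have := v.2; omega
    set A := {ω : Edg n → Bool | ω (cedge v false h) = true} ∩ Ydown (child v false h) with hA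
    set B := {ω : Edg n → Bool | ω (cedge v true h) = true} ∩ Ydown (child v true h) with hB
    have childlen : ∀ b (hb : v.1.length < n), n - (child v b hb).1.length = k := by
      intro b hb; simp only [child, List.length_append, List.length_cons, List.length_nil]
      omega
    have hmAB : ∀ b (hb : v.1.length < n),
        treeMeasure n p ({ω : Edg n → Bool | ω (cedge v b hb) = true} ∩ Ydown (child v b hb))
          = ENNReal.ofReal (p * rho p k) := by
      intro b hb
      rw [indep_of_detBy h0 h1 (edge_detBy (cedge v b hb))
        (((Ydown_detBy (child v b hb)).mono ?_))]
      · rw [measure_edge_true h0 h1, ih _ (childlen b hb),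
          ← ENNReal.ofReal_mul h0]
      · rintro u ⟨hpre, hlen⟩
        simp only [Set.mem_compl_iff, Set.mem_singleton_iff]
        intro hu
        rw [hu] at hlen
        simp only [cedge, child, List.length_append, List.length_cons,
          List.length_nil] at hlen
        omega
    have detA : DetBy A {u : Edg n | v.1 ++ [false] <+: u.1} := by
      refine DetBy.inter ((edge_detBy _).mono ?_) ((Ydown_detBy _).mono ?_)
      · intro u hu
        simp only [Set.mem_singleton_iff] at hu
        subst hu
        exact List.prefix_refl _
      · rintro u ⟨h1', _⟩; exact h1'
    have detB : DetBy B {u : Edg n | v.1 ++ [true] <+: u.1} := by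
      refine DetBy.inter ((edge_detBy _).mono ?_) ((Ydown_detBy _).mono ?_)
      · intro u hu
        simp only [Set.mem_singleton_iff] at hu
        subst hu
        exact List.prefix_refl _
      · rintro u ⟨h1', _⟩; exact h1'
    have hmI : treeMeasure n p (A ∩ B) =
        ENNReal.ofReal (p * rho p k) * ENNReal.ofReal (p * rho p k) := by
      rw [indep_of_detBy h0 h1 detA (detB.mono ?_), hmAB, hmAB]
      exact (disj_prefix v.1).subset_compl_left
    have key := MeasureTheory.measure_union_add_inter (μ := treeMeasure n p) A (measSet B)
    set x := p * rho p k with hx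
    have hρ := rho_bounds h0 h1 k
    have hx0 : 0 ≤ x := mul_nonneg h0 hρ.1
    have hx1 : x ≤ 1 := by nlinarith [hρ.1, hρ.2]
    have hrho1 : rho p (k+1) = 2 * x - x * x := by
      simp only [rho, hx]; ring
    rw [Ydown_succ h, ← hA, ← hB]
    rw [hmAB, hmAB, hmI, ← ENNReal.ofReal_mul hx0] at key
    have hsplit : ENNReal.ofReal x + ENNReal.ofReal x
        = ENNReal.ofReal (2 * x - x * x) + ENNReal.ofReal (x * x) := by
      rw [← ENNReal.ofReal_add hx0 hx0,
        ← ENNReal.ofReal_add (by nlinarith) (by nlinarith)]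
      congr 1
      ring
    rw [hsplit] at key
    rw [ENNReal.add_left_inj (by simp : ENNReal.ofReal (x*x) ≠ ⊤)] at key
    rw [key, hrho1]

/-- event: some vertex at level `k` above `v` is wet downwards -/
def Tset {n : ℕ} (k : ℕ) (v : Vtx n) : Set (Edg n → Bool) :=
  {ω | ∃ u : Vtx n, u.1.length = n - k ∧ v.1 <+: u.1 ∧ ω ∈ Ydown u}

lemma Tset_base {k : ℕ} {v : Vtx n} (h : v.1.length = n - k) : Tset k v = Ydown v := by
  ext ω
  constructor
  · rintro ⟨u, hu1, hu2, hu3⟩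
    have : v.1 = u.1 := hu2.eq_of_length (by omega)
    have : v = u := Subtype.ext this
    rw [this]; exact hu3
  · intro hY; exact ⟨v, h, List.prefix_refl _, hY⟩

lemma Tset_detBy (k : ℕ) (v : Vtx n) : DetBy (Tset k v) {u : Edg n | v.1 <+: u.1} := by
  rintro ω ω' hag ⟨u, h1, h2, h3⟩
  exact ⟨u, h1, h2, Ydown_detBy u (fun e he => hag e (h2.trans he.1)) h3⟩

lemma Tset_succ {k : ℕ} {v : Vtx n} (h : v.1.length < n) (hlt : v.1.length < n - k) :
    Tset k v = Tset k (child v false h) ∪ Tset k (child v true h) := by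
  ext ω
  constructor
  · rintro ⟨u, hu1, hu2, hu3⟩
    obtain ⟨b, hb⟩ := exists_ext hu2 (by omega)
    cases b
    · exact Or.inl ⟨u, hu1, hb, hu3⟩
    · exact Or.inr ⟨u, hu1, hb, hu3⟩
  · rintro (⟨u, hu1, hu2, hu3⟩ | ⟨u, hu1, hu2, hu3⟩) <;>
      exact ⟨u, hu1, (List.prefix_append _ _).trans hu2, hu3⟩

lemma Tset_measure (h0 : 0 ≤ p) (h1 : p ≤ 1) (k : ℕ) (hk : k ≤ n) :
    ∀ m, ∀ v : Vtx n, v.1.length + m = n - k →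
      treeMeasure n p (Tset k v)ᶜ = ENNReal.ofReal ((1 - rho p k) ^ 2 ^ m) := by
  haveI := treeMeasure_prob (n := n) h0 h1
  intro m
  induction m with
  | zero =>
    intro v hv
    rw [Tset_base (by omega), MeasureTheory.prob_compl_eq_one_sub (measSet _),
      Ydown_measure h0 h1 k v (by omega)]
    rw [pow_zero, pow_one, ENNReal.ofReal_sub _ (rho_bounds h0 h1 k).1]
    simp
  | succ m ih =>
    intro v hv
    have h : v.1.length < n := by omega
    rw [Tset_succ h (by omega), Set.compl_union]
    have detA : DetBy (Tset k (child v false h))ᶜ {u : Edg n | v.1 ++ [false] <+: u.1} :=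
      (Tset_detBy k (child v false h)).compl
    have detB : DetBy (Tset k (child v true h))ᶜ {u : Edg n | v.1 ++ [true] <+: u.1} :=
      (Tset_detBy k (child v true h)).compl
    rw [indep_of_detBy h0 h1 detA (detB.mono (disj_prefix v.1).subset_compl_left)]
    have hcl : ∀ b, (child v b h).1.length + m = n - k := by
      intro b; simp only [child, List.length_append, List.length_cons, List.length_nil]
      omega
    rw [ih _ (hcl false), ih _ (hcl true)]
    have hρ := rho_bounds h0 h1 k
    have hxx : (0:ℝ) ≤ (1 - rho p k) ^ 2 ^ m := pow_nonneg (by linarith [hρ.2]) _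
    rw [← ENNReal.ofReal_mul hxx, ← pow_add]
    congr 2
    rw [pow_succ]
    ring

lemma maxLevel_bddAbove (ω : Edg n → Bool) :
    BddAbove (({0} : Set ℕ) ∪ {k | ∃ v : Vtx n, ω ∈ Ydown v ∧ n - v.1.length = k}) := by
  refine ⟨n, ?_⟩
  rintro b hb
  rcases hb with h | ⟨v, _, rfl⟩
  · simp only [Set.mem_singleton_iff] at h; omega
  · omega

lemma maxLevel_le (ω : Edg n → Bool) : maxLevel n ω ≤ n := by
  unfold maxLevel
  refine csSup_le ⟨0, Or.inl rfl⟩ ?_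
  rintro b hb
  rcases hb with h | ⟨v, _, rfl⟩
  · simp only [Set.mem_singleton_iff] at h; omega
  · omega

lemma maxLevel_ge_iff {k : ℕ} (hk1 : 1 ≤ k) (hkn : k ≤ n) (ω : Edg n → Bool) :
    k ≤ maxLevel n ω ↔ ω ∈ Tset k (root n) := by
  constructor
  · intro hge
    have hmem := Nat.sSup_mem (s := ({0} : Set ℕ) ∪ {k | ∃ v : Vtx n, ω ∈ Ydown v ∧ n - v.1.length = k})
      ⟨0, Or.inl rfl⟩ (maxLevel_bddAbove ω)
    rcases hmem with hmem | ⟨v, hv, hlev⟩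
    · exfalso
      simp only [Set.mem_singleton_iff] at hmem
      have : maxLevel n ω = 0 := hmem
      omega
    · obtain ⟨w, hwl, hpre, hcond⟩ := hv
      have hvk : v.1.length ≤ n - k := by
        have hvn := v.2
        have : k ≤ n - v.1.length := le_trans hge (le_of_eq hlev.symm)
        omega
      have htl : (w.take (n-k)).length = n - k := by
        rw [List.length_take, hwl]; omega
      refine ⟨⟨w.take (n-k), by rw [htl]; omega⟩, htl, List.nil_prefix,
        w, hwl, List.take_prefix _ _, ?_⟩
      intro u hu hlen
      apply hcond u hu
      rw [htl] at hlen
      omega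
  · rintro ⟨u, hu1, _, hY⟩
    have : k = n - u.1.length := by omega
    rw [this]
    exact le_csSup (maxLevel_bddAbove ω) (Or.inr ⟨u, hY, rfl⟩)

end Perc3
section Perc4

variable {n : ℕ} {p : ℝ}

lemma log_one_div_pos (h0 : 0 < p) (h1 : p < 1) : 0 < Real.log (1/p) := by
  apply Real.log_pos
  exact (one_lt_div h0).2 (by linarith)

lemma pow_bound_le (h0 : 0 < p) (h1 : p < 1) {m : ℕ}
    (h : Real.log 2 * n / Real.log (1/p) + 1/2 ≤ (m : ℝ)) :
    (2:ℝ)^n * p^m ≤ Real.sqrt p := by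
  have hL := log_one_div_pos h0 h1
  have hlog : Real.log (1/p) = -Real.log p := by rw [one_div, Real.log_inv]
  have hlhs : (0:ℝ) < 2^n * p^m := by positivity
  rw [← Real.log_le_log_iff hlhs (Real.sqrt_pos.2 h0)]
  rw [Real.log_mul (by positivity) (by positivity), Real.log_pow, Real.log_pow,
    Real.log_sqrt h0.le]
  have h' : Real.log 2 * n ≤ ((m:ℝ) - 1/2) * Real.log (1/p) :=
    (div_le_iff₀ hL).mp (by linarith)
  rw [hlog] at h'
  nlinarith [h']

lemma pow_bound_ge (h0 : 0 < p) (h1 : p < 1) {m : ℕ}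
    (h : (m : ℝ) + 1/2 ≤ Real.log 2 * n / Real.log (1/p)) :
    1 / Real.sqrt p ≤ (2:ℝ)^n * p^m := by
  have hL := log_one_div_pos h0 h1
  have hlog : Real.log (1/p) = -Real.log p := by rw [one_div, Real.log_inv]
  have hlhs : (0:ℝ) < 2^n * p^m := by positivity
  have hsq : (0:ℝ) < Real.sqrt p := Real.sqrt_pos.2 h0
  rw [← Real.log_le_log_iff (by positivity) hlhs]
  rw [Real.log_mul (by positivity) (by positivity), Real.log_pow, Real.log_pow,
    Real.log_div one_ne_zero (ne_of_gt hsq), Real.log_sqrt h0.le, Real.log_one]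
  have h' : ((m:ℝ) + 1/2) * Real.log (1/p) ≤ Real.log 2 * n := by
    have := (div_le_div_iff_of_pos_right hL).2 (le_refl (Real.log 2 * n))
    nlinarith [(le_div_iff₀ hL).mp h]
  rw [hlog] at h'
  nlinarith [h']

lemma one_sub_ofReal_le {a b : ℝ} (hab : 1 - b ≤ a) :
    (1:ENNReal) - ENNReal.ofReal a ≤ ENNReal.ofReal b := by
  rw [tsub_le_iff_right]
  calc (1:ENNReal) = ENNReal.ofReal 1 := by simp
    _ ≤ ENNReal.ofReal (a + b) := ENNReal.ofReal_le_ofReal (by linarith)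
    _ ≤ ENNReal.ofReal a + ENNReal.ofReal b := ENNReal.ofReal_add_le
    _ = ENNReal.ofReal b + ENNReal.ofReal a := add_comm _ _

/-- main quantitative bound for a single `n` -/
lemma measure_good_ge (h0 : 0 < p) (h4 : p ≤ 1/4) (hn : 1 ≤ n) :
    1 - ENNReal.ofReal (Real.sqrt p + Real.exp (-(1/(2*Real.sqrt p)))) ≤
      treeMeasure n p
        {ω | (maxLevel n ω : ℤ) = ⌊Real.log 2 * n / Real.log (1/p) + 1/2⌋ - 1 ∨
             (maxLevel n ω : ℤ) = ⌊Real.log 2 * n / Real.log (1/p) + 1/2⌋} := by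
  classical
  have hp1 : p < 1 := by linarith
  have hp1' : p ≤ 1 := hp1.le
  haveI := treeMeasure_prob (n := n) (p := p) h0.le hp1'
  set L := Real.log (1/p) with hLdef
  have hL : 0 < L := log_one_div_pos h0 hp1
  set κ := Real.log 2 * n / L with hκdef
  have hκ0 : 0 ≤ κ := by
    apply div_nonneg _ hL.le
    have := Real.log_nonneg (by norm_num : (1:ℝ) ≤ 2)
    positivity
  have hlog2L : Real.log 2 ≤ L := by
    rw [hLdef]
    apply Real.log_le_log (by norm_num)
    rw [le_one_div (by norm_num) h0]
    linarith
  have hκn : κ ≤ (n:ℝ) := by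
    rw [hκdef, div_le_iff₀ hL]
    have h2 : (0:ℝ) ≤ Real.log 2 := Real.log_nonneg (by norm_num)
    nlinarith [mul_le_mul_of_nonneg_left hlog2L (by positivity : (0:ℝ) ≤ (n:ℝ))]
  set K : ℤ := ⌊κ + 1/2⌋ with hKdef
  have hK0 : 0 ≤ K := Int.floor_nonneg.2 (by linarith)
  have hKle : (K:ℝ) ≤ κ + 1/2 := Int.floor_le _
  have hKgt : κ + 1/2 < (K:ℝ) + 1 := Int.lt_floor_add_one _
  have hKn : K ≤ (n:ℤ) := by
    have : (K:ℝ) ≤ (n:ℝ) + 1/2 := by linarith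
    have h2 : (K:ℝ) < (n:ℝ) + 1 := by linarith
    exact_mod_cast Int.lt_add_one_iff.mp (by exact_mod_cast h2)
  set K' : ℕ := K.toNat with hK'def
  have hK'K : (K' : ℤ) = K := Int.toNat_of_nonneg hK0
  set good := {ω : Edg n → Bool | (maxLevel n ω : ℤ) = K - 1 ∨ (maxLevel n ω : ℤ) = K}
    with hgood
  set bad1 := {ω : Edg n → Bool | K' + 1 ≤ maxLevel n ω} with hbad1
  set bad2 := {ω : Edg n → Bool | (maxLevel n ω : ℤ) < K - 1} with hbad2
  have hsub : goodᶜ ⊆ bad1 ∪ bad2 := by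
    intro ω hω
    simp only [hgood, Set.mem_compl_iff, Set.mem_setOf_eq, not_or] at hω
    obtain ⟨hω1, hω2⟩ := hω
    rcases lt_or_ge (maxLevel n ω : ℤ) (K - 1) with h | h
    · exact Or.inr h
    · left
      show K' + 1 ≤ maxLevel n ω
      omega
  -- bound on bad1
  have hbad1m : treeMeasure n p bad1 ≤ ENNReal.ofReal (Real.sqrt p) := by
    rcases le_or_gt (K' + 1) n with hK1n | hK1n
    · have e1 : bad1 = Tset (K'+1) (root n) :=
        Set.ext fun ω => maxLevel_ge_iff (Nat.le_add_left 1 K') hK1n ω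
      have hroot : (root n).1.length + (n - (K'+1)) = n - (K'+1) := by simp [root]
      have hTc := Tset_measure h0.le hp1' (K'+1) hK1n (n - (K'+1)) (root n) hroot
      have e2 : treeMeasure n p bad1 = 1 - treeMeasure n p (Tset (K'+1) (root n))ᶜ := by
        rw [e1, ← compl_compl (Tset (K'+1) (root n)),
          MeasureTheory.prob_compl_eq_one_sub (measSet _), compl_compl]
      rw [e2, hTc]
      set ρ := rho p (K'+1) with hρdef
      have hρb := rho_bounds h0.le hp1' (K'+1)
      set N := 2^(n - (K'+1)) with hNdef
      have hbern : 1 - (N:ℝ) * ρ ≤ (1 - ρ)^N := by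
        have := one_add_mul_le_pow (a := -ρ) (by linarith [hρb.2]) N
        calc 1 - (N:ℝ) * ρ = 1 + (N:ℝ) * (-ρ) := by ring
        _ ≤ (1 + (-ρ))^N := this
        _ = (1 - ρ)^N := by ring_nf
      refine le_trans (one_sub_ofReal_le hbern) (ENNReal.ofReal_le_ofReal ?_)
      have hNρ : (N:ℝ) * ρ ≤ (2:ℝ)^n * p^(K'+1) := by
        have hρle : ρ ≤ (2*p)^(K'+1) := rho_le_pow h0.le hp1' (K'+1)
        have hN : (N:ℝ) = (2:ℝ)^(n - (K'+1)) := by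
          rw [hNdef]; push_cast; rfl
        calc (N:ℝ) * ρ ≤ (2:ℝ)^(n-(K'+1)) * (2*p)^(K'+1) := by
              rw [hN]
              apply mul_le_mul_of_nonneg_left hρle (by positivity)
        _ = (2:ℝ)^(n-(K'+1)) * ((2:ℝ)^(K'+1) * p^(K'+1)) := by rw [mul_pow]
        _ = ((2:ℝ)^(n-(K'+1)) * (2:ℝ)^(K'+1)) * p^(K'+1) := by ring
        _ = (2:ℝ)^n * p^(K'+1) := by
              rw [← pow_add]
              have hnn : n-(K'+1)+(K'+1) = n := by omega
              rw [hnn]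
      refine le_trans hNρ (pow_bound_le h0 hp1 ?_)
      show κ + 1/2 ≤ ((K'+1 : ℕ) : ℝ)
      have hKr : ((K' : ℕ) : ℝ) = ((K : ℤ) : ℝ) := by exact_mod_cast hK'K
      push_cast
      rw [hKr]
      linarith [hKgt]
    · have e1 : bad1 = ∅ := by
        ext ω
        simp only [hbad1, Set.mem_setOf_eq, Set.mem_empty_iff_false, iff_false, not_le]
        have := maxLevel_le (n := n) ω
        omega
      rw [e1]
      simp [Real.sqrt_nonneg]
  -- bound on bad2
  have hbad2m : treeMeasure n p bad2 ≤
      ENNReal.ofReal (Real.exp (-(1/(2*Real.sqrt p)))) := by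
    rcases le_or_gt K 1 with hK1 | hK1
    · have e1 : bad2 = ∅ := by
        ext ω
        simp only [hbad2, Set.mem_setOf_eq, Set.mem_empty_iff_false, iff_false, not_lt]
        omega
      rw [e1]
      simp [Real.exp_nonneg]
    · set k : ℕ := K' - 1 with hkdef
      have hk1 : 1 ≤ k := by omega
      have hkK : (k : ℤ) = K - 1 := by omega
      have hkn : k ≤ n := by omega
      have hsub2 : bad2 ⊆ (Tset k (root n))ᶜ := by
        intro ω hω
        simp only [hbad2, Set.mem_setOf_eq] at hω
        rw [Set.mem_compl_iff, ← maxLevel_ge_iff hk1 hkn ω]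
        omega
      have hroot : (root n).1.length + (n - k) = n - k := by simp [root]
      have hTc := Tset_measure h0.le hp1' k hkn (n - k) (root n) hroot
      refine le_trans (MeasureTheory.measure_mono hsub2) ?_
      rw [hTc]
      apply ENNReal.ofReal_le_ofReal
      set ρ := rho p k with hρdef
      have hρb := rho_bounds h0.le hp1' k
      set N := 2^(n - k) with hNdef
      have step1 : (1 - ρ)^N ≤ Real.exp (-((N:ℝ) * ρ)) := by
        calc (1 - ρ)^N ≤ (Real.exp (-ρ))^N := by
              apply pow_le_pow_left₀ (by linarith [hρb.2])
              linarith [Real.add_one_le_exp (-ρ)]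
        _ = Real.exp (-((N:ℝ) * ρ)) := by
              rw [← Real.exp_nat_mul]
              congr 1
              ring
      refine le_trans step1 (Real.exp_le_exp.2 ?_)
      rw [neg_le_neg_iff]
      -- need 1/(2 √p) ≤ N ρ
      have hρge : (2*p)^k * (1 - p) ≤ ρ := rho_ge h0.le h4 k
      have hN : (N:ℝ) = (2:ℝ)^(n - k) := by rw [hNdef]; push_cast; rfl
      have h2pow : (2:ℝ)^(n-k) * (2:ℝ)^k = 2^n := by
        rw [← pow_add]; congr 1; omega
      have hNρ : (2:ℝ)^n * p^k * (1 - p) ≤ (N:ℝ) * ρ := by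
        calc (2:ℝ)^n * p^k * (1-p) = (2:ℝ)^(n-k) * ((2*p)^k * (1-p)) := by
              rw [mul_pow, ← h2pow]; ring
        _ ≤ (N:ℝ) * ρ := by
              rw [hN]
              apply mul_le_mul_of_nonneg_left hρge (by positivity)
      have hpow : 1 / Real.sqrt p ≤ (2:ℝ)^n * p^k := by
        apply pow_bound_ge h0 hp1
        show (k:ℝ) + 1/2 ≤ κ
        have hkr : (k:ℝ) = (K:ℝ) - 1 := by exact_mod_cast hkK
        rw [hkr]
        linarith [hKle]
      have hsq : (0:ℝ) < Real.sqrt p := Real.sqrt_pos.2 h0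
      have h2n : (0:ℝ) ≤ (2:ℝ)^n * p^k := by positivity
      calc 1/(2*Real.sqrt p) = (1/Real.sqrt p) * (1/2) := by ring
      _ ≤ ((2:ℝ)^n * p^k) * (1 - p) := by
            apply mul_le_mul hpow (by linarith) (by norm_num) h2n
      _ ≤ (N:ℝ) * ρ := hNρ
  -- combine
  have hcompl : treeMeasure n p goodᶜ ≤
      ENNReal.ofReal (Real.sqrt p + Real.exp (-(1/(2*Real.sqrt p)))) := by
    refine le_trans (MeasureTheory.measure_mono hsub) ?_
    refine le_trans (MeasureTheory.measure_union_le _ _) ?_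
    rw [ENNReal.ofReal_add (Real.sqrt_nonneg p) (Real.exp_nonneg _)]
    exact add_le_add hbad1m hbad2m
  have hgood_eq : treeMeasure n p good = 1 - treeMeasure n p goodᶜ := by
    rw [← compl_compl good, MeasureTheory.prob_compl_eq_one_sub (measSet _), compl_compl]
  rw [hgood_eq]
  exact tsub_le_tsub_left hcompl 1

end Perc4
/-- **Maximum depth reached by water.**  If `p_n → 0` and
`κ_n = log 2 · n / log(1/p_n)`, then with probability tending to one the
maximum level reached in downwards percolation is `⌊κ_n + 1/2⌋ - 1` or
`⌊κ_n + 1/2⌋`. -/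
theorem maxLevel_concentration (pn : ℕ → ℝ)
    (hp0 : ∀ n, 0 < pn n) (hp1 : ∀ n, pn n < 1)
    (hlim : Filter.Tendsto pn Filter.atTop (nhds 0)) :
    Filter.Tendsto
      (fun n => treeMeasure n (pn n)
        {ω | (maxLevel n ω : ℤ) = ⌊Real.log 2 * n / Real.log (1 / pn n) + 1 / 2⌋ - 1 ∨
             (maxLevel n ω : ℤ) = ⌊Real.log 2 * n / Real.log (1 / pn n) + 1 / 2⌋})
      Filter.atTop (nhds 1) := by
  have hev : ∀ᶠ m in Filter.atTop, pn m ≤ 1/4 ∧ 1 ≤ m := by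
    filter_upwards [hlim.eventually (eventually_le_nhds (by norm_num : (0:ℝ) < 1/4)),
      Filter.eventually_ge_atTop 1] with m h1 h2
    exact ⟨h1, h2⟩
  set f : ℕ → ℝ := fun m => Real.sqrt (pn m) + Real.exp (-(1/(2*Real.sqrt (pn m)))) with hf
  have hsq : Filter.Tendsto (fun m => Real.sqrt (pn m)) Filter.atTop (nhds 0) := by
    have := (Real.continuous_sqrt.tendsto 0).comp hlim
    simpa [Function.comp_def] using this
  have hexp : Filter.Tendsto (fun m => Real.exp (-(1/(2*Real.sqrt (pn m)))))
      Filter.atTop (nhds 0) := by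
    apply Real.tendsto_exp_atBot.comp
    have hginf : Filter.Tendsto (fun m => 1/(2*Real.sqrt (pn m))) Filter.atTop
        Filter.atTop := by
      have hpos : ∀ m, 0 < 2*Real.sqrt (pn m) := fun m => by
        have := Real.sqrt_pos.2 (hp0 m); linarith
      have h2 : Filter.Tendsto (fun m => 2*Real.sqrt (pn m)) Filter.atTop
          (nhdsWithin 0 (Set.Ioi 0)) := by
        apply tendsto_nhdsWithin_of_tendsto_nhds_of_eventually_within
        · have := hsq.const_mul (2:ℝ)
          simpa using this
        · exact Filter.Eventually.of_forall fun m => hpos m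
      have h3 := h2.inv_tendsto_nhdsGT_zero
      have heq : (fun m => 1/(2*Real.sqrt (pn m))) = (fun m => 2*Real.sqrt (pn m))⁻¹ := by
        funext m; simp [one_div]
      rw [heq]
      exact h3
    exact Filter.tendsto_neg_atTop_atBot.comp hginf
  have hfl : Filter.Tendsto f Filter.atTop (nhds 0) := by
    have := hsq.add hexp
    simpa [hf] using this
  have hofReal : Filter.Tendsto (fun m => ENNReal.ofReal (f m)) Filter.atTop (nhds 0) := by
    have := ENNReal.tendsto_ofReal hfl
    simpa using this
  have hlower : Filter.Tendsto (fun m => 1 - ENNReal.ofReal (f m)) Filter.atTop (nhds 1) := by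
    have h1 : Filter.Tendsto (fun _ : ℕ => (1:ENNReal)) Filter.atTop (nhds 1) :=
      tendsto_const_nhds
    have := ENNReal.Tendsto.sub h1 hofReal (Or.inl (by simp))
    simpa using this
  refine tendsto_of_tendsto_of_tendsto_of_le_of_le' hlower tendsto_const_nhds ?_ ?_
  · filter_upwards [hev] with m hm
    exact measure_good_ge (hp0 m) hm.1 hm.2
  · refine Filter.Eventually.of_forall fun m => ?_
    haveI := treeMeasure_prob (n := m) (hp0 m).le (hp1 m).le
    exact MeasureTheory.prob_le_one
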